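/- (Lemma 2: vertex covers suffice) Let F be a deterministic filter with no unreachable states. If there exists a deterministic filter F* with at most k states that output simulates F, then there exists a zipped vertex cover K on F with at most k subsets such that every subset of K has a common output, and consequently a filter induced from K is a deterministic filter with at most k states that output simulates F. -/
import Mathlib


/-- A (combinatorial / procrustean) filter: states `V`, observations `Y`, outputs `C`. -/
structure ProcFilter (V Y C : Type) where
  V0 : Set V
  tr : V → V → Set Y
  out : V → Set C
  out_nonempty : ∀ v, (out v).Nonempty

namespace ProcFilter

variable {V W X Y C : Type}

/-- States reached by tracing a string from state `v`. -/
def reachedFrom (F : ProcFilter V Y C) : V → List Y → Set V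
  | v, [] => {v}
  | v, y :: s => {w | ∃ u, y ∈ F.tr v u ∧ w ∈ F.reachedFrom u s}

/-- States reached by a string from the initial states. -/
def reached (F : ProcFilter V Y C) (s : List Y) : Set V :=
  ⋃ v0 ∈ F.V0, F.reachedFrom v0 s

/-- Interaction language of `F`. -/
def lang (F : ProcFilter V Y C) : Set (List Y) :=
  {s | (F.reached s).Nonempty}

/-- Outputs of all states reached by `s`. -/
def outs (F : ProcFilter V Y C) (s : List Y) : Set C :=
  ⋃ v ∈ F.reached s, F.out v

/-- Strings reaching state `w` from the initial states. -/
def reaching (F : ProcFilter V Y C) (w : V) : Set (List Y) :=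
  {s | w ∈ F.reached s}

/-- A deterministic filter: one initial state, disjoint outgoing labels. -/
def Deterministic (F : ProcFilter V Y C) : Prop :=
  (∃ v0, F.V0 = {v0}) ∧
    ∀ v1 v2 v3 : V, v2 ≠ v3 → F.tr v1 v2 ∩ F.tr v1 v3 = ∅

/-- `F'` output simulates `F`. -/
def OutputSimulates (F' : ProcFilter W Y C) (F : ProcFilter V Y C) : Prop :=
  ∀ s ∈ F.lang, (F'.outs s).Nonempty ∧ F'.outs s ⊆ F.outs s

/-- The `y`-children of a set of states `S` in `F`. -/
def yChildren (F : ProcFilter V Y C) (S : Set V) (y : Y) : Set V :=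
  {w | ∃ v ∈ S, y ∈ F.tr v w}

/-- A vertex cover on `F`: a collection of subsets of states covering all states. -/
def IsCover (_F : ProcFilter V Y C) (K : Set (Set V)) : Prop :=
  ⋃₀ K = (Set.univ : Set V)

/-- A zipped collection: the `y`-children of each member lie in some member. -/
def Zipped (F : ProcFilter V Y C) (K : Set (Set V)) : Prop :=
  ∀ S ∈ K, ∀ y : Y, ∃ T ∈ K, F.yChildren S y ⊆ T

/-- `G` is a filter induced from a (zipped) vertex cover `K` on `F`,
where `κ` maps each state of `G` to its corresponding member of `K`. -/
structure IsInduced (G : ProcFilter W Y C) (F : ProcFilter V Y C)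
    (K : Set (Set V)) (κ : W → Set V) : Prop where
  mem : ∀ w : W, κ w ∈ K
  nonempty : ∀ w : W, (κ w).Nonempty
  inj : Function.Injective κ
  surj : ∀ S ∈ K, S.Nonempty → ∃ w : W, κ w = S
  init : ∃ w0 : W, G.V0 = {w0} ∧ ∀ v0 ∈ F.V0, v0 ∈ κ w0
  trans_sub : ∀ (w w' : W) (y : Y), y ∈ G.tr w w' →
      F.yChildren (κ w) y ⊆ κ w' ∧ (F.yChildren (κ w) y).Nonempty
  trans_ex : ∀ (w : W) (y : Y), (F.yChildren (κ w) y).Nonempty →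
      ∃ w' : W, y ∈ G.tr w w'
  trans_unique : ∀ (w w1 w2 : W) (y : Y), y ∈ G.tr w w1 → y ∈ G.tr w w2 → w1 = w2
  out_single : ∀ w : W, ∃ o : C, G.out w = {o} ∧ ∀ v ∈ κ w, o ∈ F.out v

end ProcFilter


namespace ProcFilter

variable {V W X Y C : Type}

theorem reachedFrom_snoc (F : ProcFilter V Y C) (s : List Y) (y : Y) (v : V) :
    F.reachedFrom v (s ++ [y]) = F.yChildren (F.reachedFrom v s) y := by
  induction s generalizing v with
  | nil =>
    ext w
    simp [reachedFrom, yChildren]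
  | cons a t ih =>
    ext w
    simp only [List.cons_append, reachedFrom, Set.mem_setOf_eq, List.append_eq, ih, yChildren]
    constructor
    · rintro ⟨u, ha, x, hx, hy⟩
      exact ⟨x, ⟨u, ha, hx⟩, hy⟩
    · rintro ⟨x, ⟨u, ha, hx⟩, hy⟩
      exact ⟨u, ha, x, hx, hy⟩

theorem reached_snoc (F : ProcFilter V Y C) (s : List Y) (y : Y) :
    F.reached (s ++ [y]) = F.yChildren (F.reached s) y := by
  ext w
  simp only [reached, Set.mem_iUnion, reachedFrom_snoc, yChildren, Set.mem_setOf_eq]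
  constructor
  · rintro ⟨v0, h0, v, hv, hy⟩
    exact ⟨v, ⟨v0, h0, hv⟩, hy⟩
  · rintro ⟨v, ⟨v0, h0, hv⟩, hy⟩
    exact ⟨v0, h0, v, hv, hy⟩

theorem reached_nil (F : ProcFilter V Y C) : F.reached [] = F.V0 := by
  ext v
  simp [reached, reachedFrom]

theorem det_subsingleton {F : ProcFilter V Y C} (h : F.Deterministic) (s : List Y) :
    (F.reached s).Subsingleton := by
  induction s using List.reverseRecOn with
  | nil =>
    obtain ⟨v0, hv0⟩ := h.1
    intro a ha b hb
    rw [reached_nil, hv0] at ha hb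
    simp only [Set.mem_singleton_iff] at ha hb; rw [ha, hb]
  | append_singleton s y ih =>
    intro a ha b hb
    rw [reached_snoc] at ha hb
    obtain ⟨va, hva, hya⟩ := ha
    obtain ⟨vb, hvb, hyb⟩ := hb
    have hvab := ih hva hvb
    subst hvab
    by_contra hne
    have hd := h.2 va a b hne
    exact absurd (Set.mem_inter hya hyb) (by rw [hd]; exact not_false)

theorem yChildren_mono (F : ProcFilter V Y C) {S T : Set V} (h : S ⊆ T) (y : Y) :
    F.yChildren S y ⊆ F.yChildren T y := by
  rintro w ⟨v, hv, hy⟩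
  exact ⟨v, h hv, hy⟩

end ProcFilter

/-- Lemma 2: vertex covers suffice for filter reduction. -/
theorem stmt_6 {V W Y C : Type} [Finite V] [Fintype W]
    (F : ProcFilter V Y C) (Fstar : ProcFilter W Y C) (k : ℕ)
    (hdet : F.Deterministic)
    (hreach : ∀ v : V, (F.reaching v).Nonempty)
    (hdet' : Fstar.Deterministic)
    (hcard : Fintype.card W ≤ k)
    (hsim : Fstar.OutputSimulates F) :
    ∃ K : Set (Set V), F.IsCover K ∧ F.Zipped K ∧ K.ncard ≤ k ∧
      (∀ S ∈ K, (⋂ v ∈ S, F.out v).Nonempty) ∧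
      ∀ (X : Type) (G : ProcFilter X Y C) (κ : X → Set V),
        G.IsInduced F K κ →
          G.Deterministic ∧ Nat.card X ≤ k ∧ G.OutputSimulates F := by
  classical
  obtain ⟨v0, hv0⟩ := hdet.1
  set κs : W → Set V := fun w => {v | ∃ s, v ∈ F.reached s ∧ w ∈ Fstar.reached s} with hκs
  set K : Set (Set V) := {S | ∃ w, κs w = S ∧ S.Nonempty} with hK
  -- membership in κs via a string
  have hmemκ : ∀ w v, v ∈ κs w ↔ ∃ s, v ∈ F.reached s ∧ w ∈ Fstar.reached s := by
    intro w v; rfl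
  have hKsub : K ⊆ Set.range κs := by rintro S ⟨w, rfl, -⟩; exact ⟨w, rfl⟩
  have hKfin : K.Finite := (Set.finite_range κs).subset hKsub
  -- every reachable pair gives the cover
  have hcover : F.IsCover K := by
    apply Set.eq_univ_of_forall
    intro v
    obtain ⟨s, hs⟩ := hreach v
    have hlang : s ∈ F.lang := ⟨v, hs⟩
    obtain ⟨hne, -⟩ := hsim s hlang
    obtain ⟨c, hc⟩ := hne
    simp only [ProcFilter.outs, Set.mem_iUnion] at hc
    obtain ⟨w, hw, -⟩ := hc
    exact ⟨κs w, ⟨w, rfl, ⟨v, s, hs, hw⟩⟩, ⟨s, hs, hw⟩⟩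
  have hzip : F.Zipped K := by
    rintro S ⟨w, rfl, hSne⟩ y
    rcases Set.eq_empty_or_nonempty (F.yChildren (κs w) y) with hemp | hne
    · exact ⟨κs w, ⟨w, rfl, hSne⟩, by rw [hemp]; exact Set.empty_subset _⟩
    · obtain ⟨v', v, hv, hy⟩ := hne
      obtain ⟨s, hvs, hws⟩ := hv
      have hv' : v' ∈ F.reached (s ++ [y]) := by
        rw [F.reached_snoc]; exact ⟨v, hvs, hy⟩
      have hlang : s ++ [y] ∈ F.lang := ⟨v', hv'⟩
      obtain ⟨hne', -⟩ := hsim _ hlang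
      obtain ⟨c, hc⟩ := hne'
      simp only [ProcFilter.outs, Set.mem_iUnion] at hc
      obtain ⟨w', hw', -⟩ := hc
      rw [Fstar.reached_snoc] at hw'
      obtain ⟨w1, hw1, hyw⟩ := hw'
      have : w1 = w := ProcFilter.det_subsingleton hdet' s hw1 hws
      subst this
      refine ⟨κs w', ⟨w', rfl, ?_⟩, ?_⟩
      · refine ⟨v', s ++ [y], hv', ?_⟩
        rw [Fstar.reached_snoc]; exact ⟨w1, hws, hyw⟩
      · rintro v'' ⟨v2, hv2, hy2⟩
        obtain ⟨s2, hv2s, hw2s⟩ := hv2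
        refine ⟨s2 ++ [y], ?_, ?_⟩
        · rw [F.reached_snoc]; exact ⟨v2, hv2s, hy2⟩
        · rw [Fstar.reached_snoc]; exact ⟨w1, hw2s, hyw⟩
  have hncard : K.ncard ≤ k := by
    calc K.ncard ≤ (Set.range κs).ncard :=
          Set.ncard_le_ncard hKsub (Set.finite_range κs)
      _ ≤ Nat.card W := by
          rw [← Set.image_univ]
          calc (κs '' Set.univ).ncard ≤ (Set.univ : Set W).ncard :=
                Set.ncard_image_le Set.finite_univ
            _ = Nat.card W := Set.ncard_univ W
      _ = Fintype.card W := Nat.card_eq_fintype_card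
      _ ≤ k := hcard
  have hcommon : ∀ S ∈ K, (⋂ v ∈ S, F.out v).Nonempty := by
    rintro S ⟨w, rfl, hSne⟩
    obtain ⟨o, ho⟩ := Fstar.out_nonempty w
    refine ⟨o, ?_⟩
    simp only [Set.mem_iInter]
    rintro v ⟨s, hvs, hws⟩
    have hlang : s ∈ F.lang := ⟨v, hvs⟩
    obtain ⟨-, hsub⟩ := hsim s hlang
    have hos : o ∈ F.outs s := by
      apply hsub
      simp only [ProcFilter.outs, Set.mem_iUnion]
      exact ⟨w, hws, ho⟩
    simp only [ProcFilter.outs, Set.mem_iUnion] at hos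
    obtain ⟨v1, hv1, hov1⟩ := hos
    have : v1 = v := ProcFilter.det_subsingleton hdet s hv1 hvs
    subst this
    exact hov1
  refine ⟨K, hcover, hzip, hncard, hcommon, ?_⟩
  intro X G κ hind
  have hGdet : G.Deterministic := by
    obtain ⟨x0, hx0, -⟩ := hind.init
    refine ⟨⟨x0, hx0⟩, ?_⟩
    intro x1 x2 x3 hne
    ext y
    simp only [Set.mem_inter_iff, Set.mem_empty_iff_false, iff_false, not_and]
    intro h1 h2
    exact hne (hind.trans_unique x1 x2 x3 y h1 h2)
  have hcardX : Nat.card X ≤ k := by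
    have : Nat.card X ≤ Nat.card K := by
      have : Finite K := hKfin
      exact Nat.card_le_card_of_injective
        (fun x => (⟨κ x, hind.mem x⟩ : K))
        (fun a b hab => hind.inj (by simpa using congrArg Subtype.val hab))
    calc Nat.card X ≤ Nat.card K := this
      _ = K.ncard := Nat.card_coe_set_eq K
      _ ≤ k := hncard
  -- key simulation lemma
  have key : ∀ s ∈ F.lang, ∃ x, x ∈ G.reached s ∧ F.reached s ⊆ κ x := by
    intro s
    induction s using List.reverseRecOn with
    | nil =>
      intro _
      obtain ⟨x0, hx0, hinit⟩ := hind.init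
      refine ⟨x0, ?_, ?_⟩
      · rw [G.reached_nil, hx0]; rfl
      · rw [F.reached_nil]; exact hinit
    | append_singleton s y ih =>
      intro hlang
      obtain ⟨v', hv'⟩ := hlang
      rw [F.reached_snoc] at hv'
      obtain ⟨v, hv, hyv⟩ := hv'
      obtain ⟨x, hx, hsub⟩ := ih ⟨v, hv⟩
      have hchne : (F.yChildren (κ x) y).Nonempty :=
        ⟨v', F.yChildren_mono hsub y ⟨v, hv, hyv⟩⟩
      obtain ⟨x', hyx'⟩ := hind.trans_ex x y hchne
      refine ⟨x', ?_, ?_⟩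
      · rw [G.reached_snoc]; exact ⟨x, hx, hyx'⟩
      · rw [F.reached_snoc]
        exact (F.yChildren_mono hsub y).trans (hind.trans_sub x x' y hyx').1
  refine ⟨hGdet, hcardX, ?_⟩
  intro s hlang
  obtain ⟨x, hx, hsub⟩ := key s hlang
  obtain ⟨o, ho, hoall⟩ := hind.out_single x
  obtain ⟨v, hv⟩ := hlang
  constructor
  · refine ⟨o, ?_⟩
    simp only [ProcFilter.outs, Set.mem_iUnion]
    exact ⟨x, hx, by rw [ho]; rfl⟩
  · intro c hc
    simp only [ProcFilter.outs, Set.mem_iUnion] at hc ⊢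
    obtain ⟨x'', hx'', hcx⟩ := hc
    have : x'' = x := ProcFilter.det_subsingleton hGdet s hx'' hx
    subst this
    rw [ho] at hcx
    rw [Set.mem_singleton_iff] at hcx
    subst hcx
    exact ⟨v, hv, hoall v (hsub hv)⟩
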